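/- arXiv:math/0611102 — 2 statements merged into one kernel-verified Lean document; each statement's English description precedes it below -/
import Mathlib

section
/- The function φ_n on S_{n+1} defined by φ_n(σ) = 1 if σ fixes n+1 and φ_n(σ) = −1/n otherwise satisfies the functional equation φ_n(σ)φ_n(ζ) = (1/n!) Σ_{τ ∈ S_n} φ_n(σ τ ζ) for all σ, ζ ∈ S_{n+1}. -/
open scoped Classical

/-- `S_n` embedded in `S_{n+1}` as the stabilizer of the last point `n+1`. -/
def Sn (n : ℕ) : Subgroup (Equiv.Perm (Fin (n + 1))) :=
  MulAction.stabilizer (Equiv.Perm (Fin (n + 1))) (Fin.last n)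

lemma mem_Sn_iff {n : ℕ} (τ : Equiv.Perm (Fin (n+1))) :
    τ ∈ Sn n ↔ τ (Fin.last n) = Fin.last n := Iff.rfl

lemma card_Sn (n : ℕ) : Nat.card (Sn n) = n.factorial := by
  have h := Subgroup.card_mul_index (Sn n)
  have hidx : (Sn n).index = n + 1 := by
    rw [Sn, MulAction.index_stabilizer]
    have : MulAction.orbit (Equiv.Perm (Fin (n+1))) (Fin.last n) = Set.univ := by
      ext y
      simp only [Set.mem_univ, iff_true]
      exact ⟨Equiv.swap (Fin.last n) y, by simp [Equiv.Perm.smul_def]⟩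
    rw [this, Set.ncard_univ, Nat.card_eq_fintype_card, Fintype.card_fin]
  rw [hidx] at h
  simp only [Nat.card_eq_fintype_card] at h ⊢
  rw [Fintype.card_perm, Fintype.card_fin, Nat.factorial_succ] at h
  exact Nat.eq_of_mul_eq_mul_left (Nat.succ_pos n) (by linarith)

lemma smul_Sn {n : ℕ} (τ : Sn n) (x : Fin (n+1)) :
    τ • x = (τ : Equiv.Perm (Fin (n+1))) x := rfl

lemma orbit_Sn {n : ℕ} (a : Fin (n+1)) (ha : a ≠ Fin.last n) :
    MulAction.orbit (Sn n) a = {x | x ≠ Fin.last n} := by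
  ext y
  constructor
  · rintro ⟨τ, rfl⟩
    show (τ : Equiv.Perm (Fin (n+1))) a ≠ Fin.last n
    intro hy
    have hτ : (τ : Equiv.Perm (Fin (n+1))) (Fin.last n) = Fin.last n := τ.2
    exact ha ((τ : Equiv.Perm (Fin (n+1))).injective (hy.trans hτ.symm))
  · intro hy
    refine ⟨⟨Equiv.swap a y, Equiv.swap_apply_of_ne_of_ne (Ne.symm ha) (Ne.symm hy)⟩, ?_⟩
    show Equiv.swap a y a = y
    simp

lemma card_stab (n : ℕ) (hn : 1 ≤ n) (a : Fin (n+1)) (ha : a ≠ Fin.last n) :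
    Nat.card (MulAction.stabilizer (Sn n) a) = (n-1).factorial := by
  have h := Subgroup.card_mul_index (MulAction.stabilizer (Sn n) a)
  have hidx : (MulAction.stabilizer (Sn n) a).index = n := by
    rw [MulAction.index_stabilizer, orbit_Sn a ha]
    have h2 : ({x | x ≠ Fin.last n} : Set (Fin (n+1))) = {Fin.last n}ᶜ := rfl
    rw [h2, ← Nat.card_coe_set_eq, Nat.card_eq_fintype_card]
    rw [Fintype.card_compl_set]
    simp
  rw [hidx, card_Sn] at h
  have hfac : n * (n-1).factorial = n.factorial := Nat.mul_factorial_pred (by omega)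
  have hpos : 0 < n := hn
  exact Nat.eq_of_mul_eq_mul_right hpos (h.trans (by rw [← hfac]; ring))

lemma card_fiber (n : ℕ) (hn : 1 ≤ n) (a c : Fin (n+1)) (ha : a ≠ Fin.last n)
    (hc : c ≠ Fin.last n) :
    Nat.card {τ : Sn n // (τ : Equiv.Perm (Fin (n+1))) a = c} = (n-1).factorial := by
  have hs : Equiv.swap a c ∈ Sn n :=
    Equiv.swap_apply_of_ne_of_ne (Ne.symm ha) (Ne.symm hc)
  set s : Sn n := ⟨Equiv.swap a c, hs⟩ with hsdef
  have e : MulAction.stabilizer (Sn n) a ≃ {τ : Sn n // (τ : Equiv.Perm (Fin (n+1))) a = c} := by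
    refine (Equiv.mulLeft s).subtypeEquiv fun τ => ?_
    rw [MulAction.mem_stabilizer_iff, smul_Sn]
    constructor
    · intro h
      show (Equiv.swap a c) ((τ : Equiv.Perm (Fin (n+1))) a) = c
      rw [h, Equiv.swap_apply_left]
    · intro h
      have h' : (Equiv.swap a c) ((τ : Equiv.Perm (Fin (n+1))) a) = c := h
      have : (Equiv.swap a c) ((τ : Equiv.Perm (Fin (n+1))) a) = (Equiv.swap a c) a := by
        rw [h', Equiv.swap_apply_left]
      exact (Equiv.swap a c).injective this
  rw [← Nat.card_congr e, card_stab n hn a ha]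

/-- The function `φₙ`: `1` on permutations fixing `n+1`, `-1/n` otherwise. -/
noncomputable def phiN (n : ℕ) : Equiv.Perm (Fin (n + 1)) → ℂ :=
  fun σ => if σ (Fin.last n) = Fin.last n then 1 else -1 / (n : ℂ)

lemma Sn_fix {n : ℕ} (τ : Sn n) :
    (τ : Equiv.Perm (Fin (n+1))) (Fin.last n) = Fin.last n := τ.2

lemma Sn_apply_ne {n : ℕ} (τ : Sn n) {x : Fin (n+1)} (hx : x ≠ Fin.last n) :
    (τ : Equiv.Perm (Fin (n+1))) x ≠ Fin.last n := by
  intro hy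
  have hτ : (τ : Equiv.Perm (Fin (n+1))) (Fin.last n) = Fin.last n := τ.2
  exact hx ((τ : Equiv.Perm (Fin (n+1))).injective (hy.trans hτ.symm))

/-- `φₙ` satisfies the spherical functional equation
`φₙ(σ)φₙ(ζ) = (1/n!) Σ_{τ∈Sₙ} φₙ(σ τ ζ)`. -/
theorem stmt15 (n : ℕ) (hn : 1 ≤ n) (σ ζ : Equiv.Perm (Fin (n + 1))) :
    phiN n σ * phiN n ζ =
      (Nat.factorial n : ℂ)⁻¹ *
        ∑ τ : Sn n, phiN n (σ * (τ : Equiv.Perm (Fin (n + 1))) * ζ) := by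
  have hnC : (n : ℂ) ≠ 0 := Nat.cast_ne_zero.mpr (by omega)
  have hfC : ((n.factorial : ℕ) : ℂ) ≠ 0 := Nat.cast_ne_zero.mpr n.factorial_ne_zero
  have hcard : (Finset.univ : Finset (Sn n)).card = n.factorial := by
    rw [Finset.card_univ, ← Nat.card_eq_fintype_card, card_Sn]
  have hinv : ∀ x, σ x = Fin.last n ↔ x = σ⁻¹ (Fin.last n) := by
    intro x
    constructor
    · intro h; rw [← h]; simp
    · intro h; rw [h]; simp
  have key : ∀ τ : Sn n, phiN n (σ * (τ : Equiv.Perm (Fin (n + 1))) * ζ) =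
      if (τ : Equiv.Perm (Fin (n+1))) (ζ (Fin.last n)) = σ⁻¹ (Fin.last n)
      then 1 else -1 / (n : ℂ) := by
    intro τ
    simp only [phiN, Equiv.Perm.mul_apply]
    simp only [hinv]
  rw [Finset.sum_congr rfl (fun τ _ => key τ)]
  have hinvlast : σ⁻¹ (Fin.last n) = Fin.last n ↔ σ (Fin.last n) = Fin.last n := by
    constructor
    · intro h; conv_lhs => rw [← h]
      simp
    · intro h; conv_lhs => rw [← h]
      simp
  by_cases hζl : ζ (Fin.last n) = Fin.last n
  · by_cases hσl : σ (Fin.last n) = Fin.last n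
    · have : ∀ τ : Sn n, (if (τ : Equiv.Perm (Fin (n+1))) (ζ (Fin.last n)) = σ⁻¹ (Fin.last n)
          then (1:ℂ) else -1 / (n : ℂ)) = 1 := by
        intro τ
        rw [if_pos]
        rw [hζl, Sn_fix τ, hinvlast.mpr hσl]
      rw [Finset.sum_congr rfl (fun τ _ => this τ), Finset.sum_const, hcard]
      simp [phiN, hσl, hζl, hfC]
    · have : ∀ τ : Sn n, (if (τ : Equiv.Perm (Fin (n+1))) (ζ (Fin.last n)) = σ⁻¹ (Fin.last n)
          then (1:ℂ) else -1 / (n : ℂ)) = -1 / (n : ℂ) := by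
        intro τ
        rw [if_neg]
        rw [hζl, Sn_fix τ]
        exact fun h => hσl (hinvlast.mp h.symm)
      rw [Finset.sum_congr rfl (fun τ _ => this τ), Finset.sum_const, hcard]
      simp only [phiN, if_pos hζl, if_neg hσl, nsmul_eq_mul, mul_one]
      field_simp
  · by_cases hσl : σ (Fin.last n) = Fin.last n
    · have : ∀ τ : Sn n, (if (τ : Equiv.Perm (Fin (n+1))) (ζ (Fin.last n)) = σ⁻¹ (Fin.last n)
          then (1:ℂ) else -1 / (n : ℂ)) = -1 / (n : ℂ) := by
        intro τ
        rw [if_neg]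
        rw [hinvlast.mpr hσl]
        exact Sn_apply_ne τ hζl
      rw [Finset.sum_congr rfl (fun τ _ => this τ), Finset.sum_const, hcard]
      simp only [phiN, if_pos hσl, if_neg hζl, nsmul_eq_mul, one_mul]
      field_simp
    · -- main case
      have hc : σ⁻¹ (Fin.last n) ≠ Fin.last n := fun h => hσl (hinvlast.mp h)
      set p : Sn n → Prop :=
        fun τ => (τ : Equiv.Perm (Fin (n+1))) (ζ (Fin.last n)) = σ⁻¹ (Fin.last n) with hp
      have hN : (Finset.univ.filter p).card = (n-1).factorial := by
        rw [← Fintype.card_subtype, ← Nat.card_eq_fintype_card]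
        exact card_fiber n hn _ _ hζl hc
      have hsplit := Finset.card_filter_add_card_filter_not
        (s := (Finset.univ : Finset (Sn n))) (p := p)
      rw [hcard, hN] at hsplit
      rw [Finset.sum_ite, Finset.sum_const, Finset.sum_const, hN,
        show (Finset.univ.filter fun x => ¬ p x).card = n.factorial - (n-1).factorial by omega]
      simp only [phiN, if_neg hσl, if_neg hζl, nsmul_eq_mul, mul_one]
      have hfac : (n : ℂ) * ((n-1).factorial : ℂ) = (n.factorial : ℂ) := by
        rw [← Nat.cast_mul, Nat.mul_factorial_pred (by omega)]
      have hle : (n-1).factorial ≤ n.factorial := Nat.factorial_le (by omega)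
      rw [Nat.cast_sub hle]
      field_simp
      ring_nf
      rw [← hfac]
      ring
end

section
/- Let φ = α χ₁^# + χ₀^# be S_n-biinvariant with φ(e)=1 (χ₀^# the indicator of S_n, χ₁^# that of S_n τ_{1,n+1} S_n), and suppose φ satisfies φ̄ * φ = ⟨φ,φ⟩ φ with ⟨f,g⟩ = (1/(n+1)!) Σ_σ f(σ)g(σ). Then α is real and α(α−1)(α+1/n) = 0, so α ∈ {0, 1, −1/n}. -/
open scoped Classical

/-- The double coset `Sₙ σ Sₙ` in `S_{n+1}`. -/
def doset (n : ℕ) (σ : Equiv.Perm (Fin (n + 1))) : Set (Equiv.Perm (Fin (n + 1))) :=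
  {x | ∃ h ∈ Sn n, ∃ h' ∈ Sn n, x = h * σ * h'}

/-- Convolution on `S_{n+1}` w.r.t. the normalized Haar measure. -/
noncomputable def conv (n : ℕ) (f g : Equiv.Perm (Fin (n + 1)) → ℂ) :
    Equiv.Perm (Fin (n + 1)) → ℂ :=
  fun x => (Nat.factorial (n + 1) : ℂ)⁻¹ * ∑ y : Equiv.Perm (Fin (n + 1)), f y * g (y⁻¹ * x)

/-- Indicator `χ₁^#` of the double coset `Sₙ τ_{1,n+1} Sₙ`. -/
noncomputable def chi1 (n : ℕ) : Equiv.Perm (Fin (n + 1)) → ℂ :=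
  fun x => if x ∈ doset n (Equiv.swap 0 (Fin.last n)) then 1 else 0

/-- Indicator `χ₀^#` of the subgroup `Sₙ`. -/
noncomputable def chi0 (n : ℕ) : Equiv.Perm (Fin (n + 1)) → ℂ :=
  fun x => if x ∈ Sn n then 1 else 0

/-- The candidate spherical function `φ = α χ₁^# + χ₀^#`. -/
noncomputable def phi (n : ℕ) (α : ℂ) : Equiv.Perm (Fin (n + 1)) → ℂ :=
  fun x => α * chi1 n x + chi0 n x

/-!
The function `φ` depends only on the image of the last point: `φ x = 1` if `x` fixes it and
`φ x = α` otherwise. Averaging a function of `σ a` over `S_{n+1}` is the same as averaging it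
over the points, so both sides of `φ̄ * φ = ⟨φ,φ⟩ φ` become explicit polynomials in `α`.
At the identity this reads `1 + n ᾱα = 1 + n α²`, forcing `α` to be real; at `τ_{1,n+1}` it
reads `α(1 + nα) + α(1 - α) = (1 + nα²) α`, i.e. `α(α - 1)(nα + 1) = 0`.
-/

open Equiv Finset Nat

section PermAverage

variable {X : Type*} [Fintype X] [DecidableEq X]

/-- Composing with `swap a b` on the right shows that the sum does not depend on `a`; then sum
over all `a`. -/
theorem card_nsmul_sum_perm_apply {M : Type*} [AddCommMonoid M] (f : X → M) (a : X) :
    Fintype.card X • ∑ σ : Perm X, f (σ a) = (Fintype.card X)! • ∑ x, f x := by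
  have hindep : ∀ b, ∑ σ : Perm X, f (σ a) = ∑ σ : Perm X, f (σ b) := fun b =>
    (Fintype.sum_equiv (Equiv.mulRight (swap a b)) _ _ fun σ => by simp).symm
  calc Fintype.card X • ∑ σ : Perm X, f (σ a)
      = ∑ b : X, ∑ σ : Perm X, f (σ b) := by simp [← hindep]
    _ = ∑ σ : Perm X, ∑ x, f x := by
        rw [Finset.sum_comm]; exact Fintype.sum_congr _ _ fun σ => Equiv.sum_comp σ f
    _ = (Fintype.card X)! • ∑ x, f x := by simp [Fintype.card_perm]

theorem inv_factorial_mul_sum_perm_apply {K : Type*} [Field K] [CharZero K] (f : X → K)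
    (a : X) :
    ((Fintype.card X)! : K)⁻¹ * ∑ σ : Perm X, f (σ a) =
      (Fintype.card X : K)⁻¹ * ∑ x, f x := by
  have h := card_nsmul_sum_perm_apply f a
  have : Nonempty X := ⟨a⟩
  have hF : ((Fintype.card X)! : K) ≠ 0 := Nat.cast_ne_zero.mpr (factorial_ne_zero _)
  simp only [nsmul_eq_mul] at h
  field_simp
  linear_combination h

end PermAverage

theorem sum_ite_eq_last {M : Type*} [AddCommMonoid M] (n : ℕ) (a b : M) :
    ∑ i : Fin (n + 1), (if i = Fin.last n then a else b) = a + n • b := by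
  simp [Fin.sum_univ_castSucc, Fin.castSucc_ne_last, add_comm]

section Spherical

variable {n : ℕ}

theorem zero_ne_last_of_one_le (hn : 1 ≤ n) : (0 : Fin (n + 1)) ≠ Fin.last n :=
  Fin.ne_of_val_ne (by simp; omega)

theorem mem_doset_swap_iff (hn : 1 ≤ n) (x : Perm (Fin (n + 1))) :
    x ∈ doset n (swap 0 (Fin.last n)) ↔ x (Fin.last n) ≠ Fin.last n := by
  have h0 := zero_ne_last_of_one_le hn
  constructor
  · rintro ⟨h, hh, h', hh', rfl⟩ heq
    change h (Fin.last n) = Fin.last n at hh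
    change h' (Fin.last n) = Fin.last n at hh'
    rw [Perm.mul_apply, Perm.mul_apply, hh', swap_apply_right, ← hh] at heq
    exact h0 (h.injective heq)
  · intro hx
    set j := x⁻¹ (Fin.last n)
    have hj : j ≠ Fin.last n := by
      rwa [Ne, Perm.inv_eq_iff_eq, eq_comm]
    -- `x = (x * swap 0 j * τ) * τ * swap 0 j`, and both outer factors fix the last point.
    refine ⟨x * swap 0 j * swap 0 (Fin.last n), ?_, swap 0 j, ?_, ?_⟩
    · change (x * swap 0 j * swap 0 (Fin.last n)) (Fin.last n) = Fin.last n
      simp [j]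
    · exact swap_apply_of_ne_of_ne h0.symm hj.symm
    · simp [mul_assoc]

theorem phi_apply (hn : 1 ≤ n) (α : ℂ) (x : Perm (Fin (n + 1))) :
    phi n α x = if x (Fin.last n) = Fin.last n then 1 else α := by
  by_cases hx : x (Fin.last n) = Fin.last n <;>
    simp [phi, chi0, chi1, mem_doset_swap_iff hn, Sn, hx]

theorem phi_inv (hn : 1 ≤ n) (α : ℂ) (x : Perm (Fin (n + 1))) :
    phi n α x⁻¹ = phi n α x := by
  simp only [phi_apply hn, Perm.inv_eq_iff_eq]
  exact if_congr eq_comm rfl rfl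

theorem inv_factorial_mul_sum_perm_fin_apply (f : Fin (n + 1) → ℂ) (a : Fin (n + 1)) :
    ((n + 1)! : ℂ)⁻¹ * ∑ σ : Perm (Fin (n + 1)), f (σ a) = ((n : ℂ) + 1)⁻¹ * ∑ i, f i := by
  simpa using inv_factorial_mul_sum_perm_apply f a

theorem inner_phi_self (hn : 1 ≤ n) (α : ℂ) :
    ((n + 1)! : ℂ)⁻¹ * ∑ σ, phi n α σ * phi n α σ = ((n : ℂ) + 1)⁻¹ * (1 + n * (α * α)) := by
  have := inv_factorial_mul_sum_perm_fin_apply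
    (fun i => if i = Fin.last n then 1 else α * α) (Fin.last n)
  simp only [phi_apply hn, sum_ite_eq_last, nsmul_eq_mul] at this ⊢
  rw [← this]
  congr 2; ext σ; split_ifs <;> simp

theorem conj_phi (α : ℂ) (x : Perm (Fin (n + 1))) :
    starRingEnd ℂ (phi n α x) = phi n (starRingEnd ℂ α) x := by
  simp only [phi, chi1, chi0]
  split_ifs <;> simp

theorem conv_phi_one (hn : 1 ≤ n) (α : ℂ) :
    conv n (fun x => starRingEnd ℂ (phi n α x⁻¹)) (phi n α) 1 =
      ((n : ℂ) + 1)⁻¹ * (1 + n * (starRingEnd ℂ α * α)) := by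
  have := inv_factorial_mul_sum_perm_fin_apply
    (fun i => if i = Fin.last n then 1 else starRingEnd ℂ α * α) (Fin.last n)
  simp only [sum_ite_eq_last, nsmul_eq_mul] at this
  rw [← this, conv]
  congr 2; ext σ
  simp only [mul_one, phi_inv hn, phi_apply hn]
  split_ifs <;> simp

theorem conv_phi_swap (hn : 1 ≤ n) {α : ℂ} (hα : starRingEnd ℂ α = α) :
    conv n (fun x => starRingEnd ℂ (phi n α x⁻¹)) (phi n α) (swap 0 (Fin.last n)) =
      ((n : ℂ) + 1)⁻¹ * (α * (1 + n * α) + α * (1 - α)) := by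
  have h0 := zero_ne_last_of_one_le hn
  -- `φ (σ τ)` is read off `σ 0`; it differs from `α` only when `σ 0` is the last point,
  -- and then `σ` moves the last point, so `φ σ = α`.
  have hpoint : ∀ σ : Perm (Fin (n + 1)),
      phi n α σ * phi n α (σ * swap 0 (Fin.last n)) =
        α * phi n α σ + α * (1 - α) * (if σ 0 = Fin.last n then 1 else 0) := by
    intro σ
    simp only [phi_apply hn, Perm.mul_apply, swap_apply_right]
    by_cases h0σ : σ 0 = Fin.last n
    · have : σ (Fin.last n) ≠ Fin.last n := fun h => h0 (σ.injective (h0σ.trans h.symm))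
      simp [h0σ, this]; ring
    · simp only [h0σ, if_false]; split_ifs <;> ring
  rw [conv, ← Equiv.sum_comp (Equiv.inv (Perm (Fin (n + 1))))]
  simp only [Equiv.inv_apply, inv_inv, conj_phi, hα, hpoint, sum_add_distrib, ← mul_sum, mul_add]
  have hmean_phi := inv_factorial_mul_sum_perm_fin_apply
    (fun i => if i = Fin.last n then 1 else α) (Fin.last n)
  have hmean_zero := inv_factorial_mul_sum_perm_fin_apply
    (fun i => if i = Fin.last n then (1 : ℂ) else 0) 0
  simp only [← phi_apply hn, sum_ite_eq_last, nsmul_eq_mul] at hmean_phi hmean_zero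
  linear_combination α * hmean_phi + α * (1 - α) * hmean_zero

end Spherical

/-- If `φ = α χ₁^# + χ₀^#` satisfies `φ̄ * φ = ⟨φ,φ⟩ φ`, with
`φ̄(x) = conj (φ(x⁻¹))` and `⟨f,g⟩ = (1/(n+1)!) Σ_σ f(σ) g(σ)`, then `α` is real and
`α(α-1)(α+1/n) = 0`, so `α ∈ {0, 1, -1/n}`. -/
theorem stmt16 (n : ℕ) (hn : 1 ≤ n) (α : ℂ)
    (h : conv n (fun x => (starRingEnd ℂ) (phi n α x⁻¹)) (phi n α) =
      fun x => ((Nat.factorial (n + 1) : ℂ)⁻¹ *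
        ∑ σ : Equiv.Perm (Fin (n + 1)), phi n α σ * phi n α σ) * phi n α x) :
    α.im = 0 ∧ α * (α - 1) * (α + 1 / (n : ℂ)) = 0 := by
  have hn0 : (n : ℂ) ≠ 0 := by norm_cast; omega
  have h_one := congrFun h 1
  rw [conv_phi_one hn, inner_phi_self hn, phi_apply hn, Perm.one_apply, if_pos rfl,
    mul_one] at h_one
  have hnorm : starRingEnd ℂ α * α = α * α :=
    mul_left_cancel₀ hn0 (add_left_cancel (mul_left_cancel₀ (inv_ne_zero (by norm_cast)) h_one))
  have hα : starRingEnd ℂ α = α := by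
    rcases eq_or_ne α 0 with rfl | hα0
    · exact map_zero _
    · exact mul_right_cancel₀ hα0 hnorm
  have h_swap := congrFun h (swap 0 (Fin.last n))
  rw [conv_phi_swap hn hα, inner_phi_self hn, phi_apply hn, swap_apply_right,
    if_neg (zero_ne_last_of_one_le hn)] at h_swap
  refine ⟨Complex.conj_eq_iff_im.mp hα, ?_⟩
  field_simp at h_swap ⊢
  linear_combination -h_swap
end
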